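/- arXiv:2411.17023 — 3 statements merged into one kernel-verified Lean document; each statement's English description precedes it below -/
import Mathlib

section
/- Let (a_d)_{d≥1} be any sequence of nonnegative reals with a_d·d^{3/2} → 0 as d → ∞. Then there exists a constant C > 0 such that for all d ≥ 1, |Σ_d(a_d)|_{d-1} ≤ C·ω_{d-1}/2^d. -/
open MeasureTheory Filter

/-- `Σ_d(a) = [-a,1]^d ∩ S^{d-1}`: points of the unit sphere in `ℝ^d` all of whose
coordinates are `≥ -a`. -/
def SigmaSet (d : ℕ) (a : ℝ) : Set (EuclideanSpace ℝ (Fin d)) :=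
  {x | x ∈ Metric.sphere (0 : EuclideanSpace ℝ (Fin d)) 1 ∧ ∀ i : Fin d, -a ≤ x i}

/-!
Translate the sphere by `u = c • (1, …, 1)` with `c > a` and project radially back to the sphere.
The map `x ↦ (x + u) / ‖x + u‖` sends `Σ_d(a)` into the open positive orthant of the sphere, whose
`2 ^ d` images under coordinate sign changes are disjoint, so its image has measure at most
`ω_{d-1} / 2 ^ d`. On the unit sphere this projection contracts distances by at most a factor
`1 + O(‖u‖)`; taking `c ≍ d^{-3/2}` gives `‖u‖ ≍ 1 / d`, so the `(d-1)`-dimensional Hausdorff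
measure shrinks by at most `(1 + 1 / d) ^ (d - 1) ≤ e`. Since `a_d d^{3/2} → 0`, such a `c > a_d`
exists for all large `d`; the finitely many small `d` are absorbed into the constant.
-/

open Set Real Metric Function
open scoped ENNReal NNReal

theorem ENNReal.le_pow_mul_div_pow (m : ℝ≥0∞) {b : ℝ≥0∞} (hb : 1 ≤ b) (hb' : b ≠ ∞)
    {d N : ℕ} (h : d ≤ N) : m ≤ b ^ N * m / b ^ d := by
  rw [ENNReal.le_div_iff_mul_le (Or.inl (pow_ne_zero _ (one_pos.trans_le hb).ne'))
    (Or.inl (ENNReal.pow_ne_top hb')), mul_comm]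
  gcongr

theorem ofReal_one_add_inv_rpow_sub_one_le_exp_one (d : ℕ) :
    ENNReal.ofReal (1 + (d : ℝ)⁻¹) ^ ((d : ℝ) - 1) ≤ ENNReal.ofReal (exp 1) :=
  calc ENNReal.ofReal (1 + (d : ℝ)⁻¹) ^ ((d : ℝ) - 1)
      ≤ ENNReal.ofReal (1 + (d : ℝ)⁻¹) ^ (d : ℝ) :=
        ENNReal.rpow_le_rpow_of_exponent_le (by simp [ENNReal.one_le_ofReal]) (by linarith)
    _ = ENNReal.ofReal ((1 + (d : ℝ)⁻¹) ^ d) := by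
        rw [ENNReal.rpow_natCast, ENNReal.ofReal_pow (by positivity)]
    _ ≤ ENNReal.ofReal (exp 1) := ENNReal.ofReal_le_ofReal one_add_inv_pow_le_exp

theorem norm_sub_le_norm_mul_dist_normalize {E : Type*} [NormedAddCommGroup E] [NormedSpace ℝ E]
    (v w : E) : ‖v - w‖ ≤ ‖v‖ * dist (‖v‖⁻¹ • v) (‖w‖⁻¹ • w) + |‖v‖ - ‖w‖| := by
  have hv : ‖v‖ • ‖v‖⁻¹ • v = v := by
    rcases eq_or_ne v 0 with rfl | h
    · simp
    · rw [smul_inv_smul₀ (norm_ne_zero_iff.2 h)]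
  have hw : ‖w‖ • ‖w‖⁻¹ • w = w := by
    rcases eq_or_ne w 0 with rfl | h
    · simp
    · rw [smul_inv_smul₀ (norm_ne_zero_iff.2 h)]
  have hw1 : ‖‖w‖⁻¹ • w‖ ≤ 1 := by
    rw [norm_smul, norm_inv, norm_norm]; exact inv_mul_le_one
  calc ‖v - w‖ = ‖‖v‖ • (‖v‖⁻¹ • v - ‖w‖⁻¹ • w) + (‖v‖ - ‖w‖) • (‖w‖⁻¹ • w)‖ := by
        rw [smul_sub, sub_smul, hv, hw]; abel_nf
    _ ≤ ‖v‖ * dist (‖v‖⁻¹ • v) (‖w‖⁻¹ • w) + |‖v‖ - ‖w‖| * ‖‖w‖⁻¹ • w‖ := by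
        refine (norm_add_le _ _).trans ?_
        rw [norm_smul, norm_smul, norm_norm, Real.norm_eq_abs, dist_eq_norm]
    _ ≤ _ := by gcongr; exact mul_le_of_le_one_right (abs_nonneg _) hw1

section InnerProductSpace

variable {E : Type*} [NormedAddCommGroup E] [InnerProductSpace ℝ E]

theorem abs_norm_add_sub_norm_add_mul_le {x y : E} (hxy : ‖x‖ = ‖y‖) (u : E) :
    |‖x + u‖ - ‖y + u‖| * (‖x + u‖ + ‖y + u‖) ≤ 2 * ‖u‖ * ‖x - y‖ := by
  have hsq : ‖x + u‖ ^ 2 - ‖y + u‖ ^ 2 = 2 * inner ℝ (x - y) u := by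
    rw [norm_add_sq_real, norm_add_sq_real, hxy, inner_sub_left]; ring
  calc |‖x + u‖ - ‖y + u‖| * (‖x + u‖ + ‖y + u‖) = |‖x + u‖ ^ 2 - ‖y + u‖ ^ 2| := by
        rw [← abs_of_nonneg (by positivity : 0 ≤ ‖x + u‖ + ‖y + u‖), ← abs_mul]; ring_nf
    _ ≤ 2 * ‖u‖ * ‖x - y‖ := by
        rw [hsq, abs_mul, abs_two, mul_assoc, mul_comm ‖u‖]
        gcongr
        exact abs_real_inner_le_norm _ _

/-- The two normalisations differ by the factor `‖x + u‖ ∈ [1 - t, 1 + t]`, and the difference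
of the norms `‖x + u‖`, `‖y + u‖` is controlled by `⟪x - y, u⟫`. -/
theorem dist_le_one_add_four_mul_mul_dist_normalize_add {u x y : E} {t : ℝ} (hu : ‖u‖ ≤ t)
    (ht : t ≤ 1 / 4) (hx : ‖x‖ = 1) (hy : ‖y‖ = 1) :
    dist x y ≤ (1 + 4 * t) * dist (‖x + u‖⁻¹ • (x + u)) (‖y + u‖⁻¹ • (y + u)) := by
  set D := dist (‖x + u‖⁻¹ • (x + u)) (‖y + u‖⁻¹ • (y + u))
  have ht0 : 0 ≤ t := (norm_nonneg u).trans hu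
  have hxu : 1 - t ≤ ‖x + u‖ := by
    have := norm_sub_norm_le x (-u); rw [norm_neg, sub_neg_eq_add] at this; linarith
  have hyu : 1 - t ≤ ‖y + u‖ := by
    have := norm_sub_norm_le y (-u); rw [norm_neg, sub_neg_eq_add] at this; linarith
  have hxu' : ‖x + u‖ ≤ 1 + t := (norm_add_le _ _).trans (by linarith)
  have hsplit : ‖x - y‖ ≤ (1 + t) * D + |‖x + u‖ - ‖y + u‖| := by
    have := norm_sub_le_norm_mul_dist_normalize (x + u) (y + u)
    rw [add_sub_add_right_eq_sub] at this
    exact this.trans (by gcongr)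
  have hgap : |‖x + u‖ - ‖y + u‖| * (1 - t) ≤ t * ‖x - y‖ := by
    have := abs_norm_add_sub_norm_add_mul_le (hx.trans hy.symm) u
    nlinarith [abs_nonneg (‖x + u‖ - ‖y + u‖), norm_nonneg (x - y)]
  have hsharp : (1 - 2 * t) * ‖x - y‖ ≤ (1 - t ^ 2) * D := by nlinarith
  have hloose : (1 - t ^ 2) * D ≤ (1 - 2 * t) * ((1 + 4 * t) * D) := by
    nlinarith [mul_nonneg (mul_nonneg ht0 (by linarith : 0 ≤ 2 - 7 * t)) (dist_nonneg : 0 ≤ D)]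
  rw [dist_eq_norm]
  exact le_of_mul_le_mul_left (hsharp.trans hloose) (by linarith)

end InnerProductSpace

theorem hausdorffMeasure_le_mul_hausdorffMeasure_image {X Y : Type*} [MetricSpace X]
    [MeasurableSpace X] [BorelSpace X] [MetricSpace Y] [MeasurableSpace Y] [BorelSpace Y]
    {f : X → Y} {s : Set X} {K : ℝ≥0} (hf : ∀ x ∈ s, ∀ y ∈ s, dist x y ≤ K * dist (f x) (f y))
    {r : ℝ} (hr : 0 ≤ r) : μH[r] s ≤ (K : ℝ≥0∞) ^ r * μH[r] (f '' s) := by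
  have hanti : AntilipschitzWith K (fun x : s => f x) :=
    AntilipschitzWith.of_le_mul_dist fun x y => hf x x.2 y y.2
  calc μH[r] s = μH[r] (univ : Set s) := by
        rw [← (isometry_subtype_coe (s := s)).hausdorffMeasure_image (Or.inl hr), image_univ,
          Subtype.range_coe]
    _ ≤ (K : ℝ≥0∞) ^ r * μH[r] ((fun x : s => f x) '' univ) := hanti.le_hausdorffMeasure_image hr _
    _ = (K : ℝ≥0∞) ^ r * μH[r] (f '' s) := by rw [image_univ, ← image_eq_range]

section Coordinates

variable {ι : Type*} [Fintype ι]

theorem EuclideanSpace.norm_toLp_const (c : ℝ) :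
    ‖(WithLp.toLp 2 fun _ => c : EuclideanSpace ℝ ι)‖ = √(Fintype.card ι) * |c| := by
  simp [EuclideanSpace.norm_eq, Real.sqrt_mul (Nat.cast_nonneg _), Real.sqrt_sq_eq_abs]

theorem normalize_add_apply_pos {x u : EuclideanSpace ℝ ι} {a : ℝ}
    (hx : ∀ i, -a ≤ x i) (hu : ∀ i, a < u i) (i : ι) :
    0 < (‖x + u‖⁻¹ • (x + u)) i := by
  have hxu : 0 < (x + u) i := by simp only [PiLp.add_apply]; linarith [hx i, hu i]
  have hne : x + u ≠ 0 := fun h => by simp [h] at hxu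
  rw [PiLp.smul_apply, smul_eq_mul]
  have := norm_pos_iff.2 hne
  positivity

noncomputable def signFlip (ε : ι → Bool) : EuclideanSpace ℝ ι ≃ₗᵢ[ℝ] EuclideanSpace ℝ ι :=
  .piLpCongrRight 2 fun i => if ε i then .refl ℝ ℝ else .neg ℝ

theorem signFlip_apply (ε : ι → Bool) (x : EuclideanSpace ℝ ι) (i : ι) :
    signFlip ε x i = if ε i then x i else -x i := by
  by_cases h : ε i <;> simp [signFlip, h]

theorem signFlip_apply_pos_iff {ε : ι → Bool} {x : EuclideanSpace ℝ ι} {i : ι} (hx : 0 < x i) :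
    0 < signFlip ε x i ↔ ε i := by
  by_cases h : ε i <;> simp [signFlip_apply, h, hx, hx.le]

theorem two_pow_card_mul_hausdorffMeasure_le_sphere (r : ℝ) {B : Set (EuclideanSpace ℝ ι)}
    (hB : B ⊆ sphere 0 1) (hpos : ∀ y ∈ B, ∀ i, 0 < y i) :
    2 ^ Fintype.card ι * μH[r] B ≤ μH[r] (sphere (0 : EuclideanSpace ℝ ι) 1) := by
  set P : Set (EuclideanSpace ℝ ι) := sphere 0 1 ∩ {y | ∀ i, 0 < y i}
  have hP : MeasurableSet P := by
    refine isClosed_sphere.measurableSet.inter (IsOpen.measurableSet ?_)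
    simp only [ofPred_forall]
    exact isOpen_iInter_of_finite fun i => isOpen_lt continuous_const (by fun_prop)
  have hBP : B ⊆ P := fun y hy => ⟨hB hy, hpos y hy⟩
  have hdisj : Pairwise (Disjoint on fun ε => signFlip ε '' P) := by
    intro ε ε' hne
    refine Set.disjoint_left.2 ?_
    rintro _ ⟨y, hy, rfl⟩ ⟨y', hy', heq⟩
    refine hne (funext fun i => Bool.eq_iff_iff.2 ?_)
    rw [← signFlip_apply_pos_iff (hy.2 i), ← signFlip_apply_pos_iff (hy'.2 i), heq]
  have hflip : ∀ ε, μH[r] (signFlip ε '' P) = μH[r] P := fun ε =>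
    (signFlip ε).toIsometryEquiv.hausdorffMeasure_image r P
  classical
  calc 2 ^ Fintype.card ι * μH[r] B ≤ ∑ ε : ι → Bool, μH[r] (signFlip ε '' P) := by
        simp only [hflip, Finset.sum_const, Finset.card_univ, Fintype.card_fun, Fintype.card_bool,
          nsmul_eq_mul]
        push_cast
        gcongr
    _ = μH[r] (⋃ ε, signFlip ε '' P) := by
        rw [measure_iUnion hdisj, tsum_fintype]
        intro ε
        rw [LinearIsometryEquiv.image_eq_preimage_symm]
        exact (signFlip ε).symm.continuous.measurable hP
    _ ≤ μH[r] (sphere (0 : EuclideanSpace ℝ ι) 1) := by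
        refine measure_mono (iUnion_subset fun ε => ?_)
        rintro _ ⟨y, hy, rfl⟩
        simpa using hy.1

end Coordinates

theorem hausdorffMeasure_sigmaSet_le_of_lt {d : ℕ} (hd : 1 ≤ d) {a c : ℝ} (hac : a < c)
    (hc : √d * |c| ≤ 1 / 4) :
    μH[(d : ℝ) - 1] (SigmaSet d a) ≤ ENNReal.ofReal (1 + 4 * (√d * |c|)) ^ ((d : ℝ) - 1) *
      μH[(d : ℝ) - 1] (sphere (0 : EuclideanSpace ℝ (Fin d)) 1) / 2 ^ d := by
  set u : EuclideanSpace ℝ (Fin d) := WithLp.toLp 2 fun _ => c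
  set T := fun x : EuclideanSpace ℝ (Fin d) => ‖x + u‖⁻¹ • (x + u)
  have hu : ‖u‖ = √d * |c| := by simpa using EuclideanSpace.norm_toLp_const (ι := Fin d) c
  have hnorm : ∀ x ∈ SigmaSet d a, ‖x‖ = 1 := fun x hx => mem_sphere_zero_iff_norm.1 hx.1
  have hdist : ∀ x ∈ SigmaSet d a, ∀ y ∈ SigmaSet d a,
      dist x y ≤ (1 + 4 * (√d * |c|)).toNNReal * dist (T x) (T y) := fun x hx y hy => by
    rw [Real.coe_toNNReal _ (by positivity)]
    exact dist_le_one_add_four_mul_mul_dist_normalize_add hu.le hc (hnorm x hx) (hnorm y hy)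
  have hT_sphere : T '' SigmaSet d a ⊆ sphere 0 1 := by
    rintro _ ⟨x, hx, rfl⟩
    refine mem_sphere_zero_iff_norm.2 (norm_smul_inv_norm fun h => ?_)
    have := norm_sub_norm_le x (-u)
    rw [norm_neg, sub_neg_eq_add, h, norm_zero, hnorm x hx, hu] at this
    linarith
  have hT_pos : ∀ y ∈ T '' SigmaSet d a, ∀ i, 0 < y i := by
    rintro _ ⟨x, hx, rfl⟩
    exact normalize_add_apply_pos hx.2 fun _ => hac
  have hcard := two_pow_card_mul_hausdorffMeasure_le_sphere ((d : ℝ) - 1) hT_sphere hT_pos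
  rw [Fintype.card_fin, mul_comm, ← ENNReal.le_div_iff_mul_le (by simp) (by simp)] at hcard
  calc μH[(d : ℝ) - 1] (SigmaSet d a)
      ≤ ENNReal.ofReal (1 + 4 * (√d * |c|)) ^ ((d : ℝ) - 1) * μH[(d : ℝ) - 1] (T '' SigmaSet d a) :=
        hausdorffMeasure_le_mul_hausdorffMeasure_image hdist (sub_nonneg.2 (Nat.one_le_cast.2 hd))
    _ ≤ _ := by rw [mul_div_assoc]; gcongr

theorem hausdorffMeasure_sigmaSet_le {d : ℕ} (hd : 1 ≤ d) {a : ℝ}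
    (ha : a * (d : ℝ) ^ ((3 : ℝ) / 2) < 1 / 4) :
    μH[(d : ℝ) - 1] (SigmaSet d a) ≤ ENNReal.ofReal (exp 1) *
      μH[(d : ℝ) - 1] (sphere (0 : EuclideanSpace ℝ (Fin d)) 1) / 2 ^ d := by
  have hd0 : (0 : ℝ) < d := Nat.cast_pos.2 hd
  have hd32 : (d : ℝ) ^ ((3 : ℝ) / 2) = d * √d := by
    rw [Real.sqrt_eq_rpow, ← Real.rpow_one_add' hd0.le (by norm_num)]; norm_num
  -- with `c = 1 / (4 d^{3/2})` the distortion factor `1 + 4 √d c` is `1 + 1 / d`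
  set c : ℝ := (4 * d * √d)⁻¹ with hc_def
  have hcd : √d * |c| = (4 * (d : ℝ))⁻¹ := by
    rw [abs_of_pos (by positivity), hc_def]; field_simp
  have hac : a < c := by
    rw [hc_def, ← one_div, lt_div_iff₀ (by positivity)]
    linarith [hd32 ▸ ha]
  have hc : √d * |c| ≤ 1 / 4 := by
    rw [hcd, inv_le_comm₀ (by positivity) (by norm_num)]; linarith [(Nat.one_le_cast (α := ℝ)).2 hd]
  refine (hausdorffMeasure_sigmaSet_le_of_lt hd hac hc).trans ?_
  rw [hcd, show 4 * (4 * (d : ℝ))⁻¹ = (d : ℝ)⁻¹ by field_simp]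
  gcongr
  exact ofReal_one_add_inv_rpow_sub_one_le_exp_one d

theorem sigma_volume_upper_bound_general (a : ℕ → ℝ)
    (hlim : Tendsto (fun d : ℕ => a d * (d : ℝ) ^ ((3 : ℝ) / 2)) atTop (nhds 0)) :
    ∃ C : ℝ, 0 < C ∧ ∀ d : ℕ, 1 ≤ d →
      μH[(d : ℝ) - 1] (SigmaSet d (a d)) ≤
        ENNReal.ofReal C *
          μH[(d : ℝ) - 1] (Metric.sphere (0 : EuclideanSpace ℝ (Fin d)) 1) / 2 ^ d := by
  obtain ⟨N, hN⟩ := eventually_atTop.1 (hlim.eventually_lt_const (by norm_num : (0 : ℝ) < 1 / 4))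
  refine ⟨max (exp 1) (2 ^ N), by positivity, fun d hd => ?_⟩
  rcases le_or_gt N d with hNd | hdN
  · refine (hausdorffMeasure_sigmaSet_le hd (hN d hNd)).trans ?_
    gcongr
    exact le_max_left _ _
  · calc μH[(d : ℝ) - 1] (SigmaSet d (a d))
        ≤ μH[(d : ℝ) - 1] (sphere (0 : EuclideanSpace ℝ (Fin d)) 1) := measure_mono fun x hx => hx.1
      _ ≤ 2 ^ N * μH[(d : ℝ) - 1] (sphere (0 : EuclideanSpace ℝ (Fin d)) 1) / 2 ^ d :=
          ENNReal.le_pow_mul_div_pow _ one_le_two ENNReal.ofNat_ne_top hdN.le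
      _ ≤ _ := by
          gcongr ?_ * _ / _
          rw [← ENNReal.ofReal_ofNat 2, ← ENNReal.ofReal_pow zero_le_two]
          exact ENNReal.ofReal_le_ofReal (le_max_right _ _)

/-- if `a_d ≥ 0` and `a_d · d^{3/2} → 0`, then there is `C > 0` with
`|Σ_d(a_d)|_{d-1} ≤ C · ω_{d-1} / 2^d` for all `d ≥ 1`. -/
theorem sigma_volume_upper_bound (a : ℕ → ℝ) (ha : ∀ d, 0 ≤ a d)
    (hlim : Tendsto (fun d : ℕ => a d * (d : ℝ) ^ ((3 : ℝ) / 2)) atTop (nhds 0)) :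
    ∃ C : ℝ, 0 < C ∧ ∀ d : ℕ, 1 ≤ d →
      μH[(d : ℝ) - 1] (SigmaSet d (a d)) ≤
        ENNReal.ofReal C *
          μH[(d : ℝ) - 1] (Metric.sphere (0 : EuclideanSpace ℝ (Fin d)) 1) / 2 ^ d :=
  sigma_volume_upper_bound_general a hlim
end

section
/- Let d ≥ 2, 0 ≤ k ≤ d, and a ∈ [0,1). For 0 ≤ s ≤ a, let H_s := V_{k+1,d+1}(a) ∩ {x ∈ ℝ^{d+1} : x_{k+1} = -s} denote the slice of V_{k+1,d+1}(a) at height -s in the (k+1)-st coordinate. Then |H_s|_{d-1} ≤ (1-s²)^{(d-1)/2} · |V_{k,d}(a/√(1-s²))|_{d-1}, and in particular |H_s|_{d-1} ≤ |V_{k,d}(a/√(1-a²))|_{d-1}. -/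
open MeasureTheory

/-- `V_{k,d}(a) = ([-a,1]^k × [0,1]^{d-k}) ∩ S^{d-1}`: points of the unit sphere in `ℝ^d`
whose first `k` coordinates are `≥ -a` and whose remaining coordinates are `≥ 0`. -/
def V (d k : ℕ) (a : ℝ) : Set (EuclideanSpace ℝ (Fin d)) :=
  {x | x ∈ Metric.sphere (0 : EuclideanSpace ℝ (Fin d)) 1 ∧
    ∀ i : Fin d, if (i : ℕ) < k then -a ≤ x i else 0 ≤ x i}

open scoped Pointwise ENNReal

/-- `V` is monotone in the parameter `a`. -/
lemma V_mono (d k : ℕ) {a b : ℝ} (hab : a ≤ b) : V d k a ⊆ V d k b := by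
  rintro x ⟨hx1, hx2⟩
  refine ⟨hx1, fun i => ?_⟩
  have := hx2 i
  split_ifs with h
  · rw [if_pos h] at this; linarith
  · rwa [if_neg h] at this

/-- the slice `H_s = V_{k+1,d+1}(a) ∩ {x_{k+1} = -s}` satisfies
`|H_s|_{d-1} ≤ (1-s²)^{(d-1)/2} · |V_{k,d}(a/√(1-s²))|_{d-1}` and in particular
`|H_s|_{d-1} ≤ |V_{k,d}(a/√(1-a²))|_{d-1}`. -/
theorem slice_volume_bound (d k : ℕ) (hd : 2 ≤ d) (hk : k ≤ d)
    (a s : ℝ) (ha0 : 0 ≤ a) (ha1 : a < 1) (hs0 : 0 ≤ s) (hsa : s ≤ a) :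
    μH[(d : ℝ) - 1]
        (V (d + 1) (k + 1) a ∩ {x | x ⟨k, Nat.lt_succ_of_le hk⟩ = -s}) ≤
      ENNReal.ofReal ((1 - s ^ 2) ^ (((d : ℝ) - 1) / 2)) *
        μH[(d : ℝ) - 1] (V d k (a / Real.sqrt (1 - s ^ 2))) ∧
    μH[(d : ℝ) - 1]
        (V (d + 1) (k + 1) a ∩ {x | x ⟨k, Nat.lt_succ_of_le hk⟩ = -s}) ≤
      μH[(d : ℝ) - 1] (V d k (a / Real.sqrt (1 - a ^ 2))) := by
  have hd1 : (0:ℝ) ≤ (d : ℝ) - 1 := by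
    have : (2:ℝ) ≤ (d:ℝ) := by exact_mod_cast hd
    linarith
  set p : Fin (d+1) := ⟨k, Nat.lt_succ_of_le hk⟩ with hp
  have hs1 : s < 1 := lt_of_le_of_lt hsa ha1
  have h1s2 : 0 < 1 - s ^ 2 := by nlinarith
  have h1a2 : 0 < 1 - a ^ 2 := by nlinarith
  set c := Real.sqrt (1 - s ^ 2) with hc
  have hc0 : 0 < c := Real.sqrt_pos.mpr h1s2
  set H := V (d + 1) (k + 1) a ∩ {x | x p = -s} with hH
  -- the projection and the insertion maps
  set f : EuclideanSpace ℝ (Fin (d+1)) → EuclideanSpace ℝ (Fin d) :=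
    fun x => WithLp.toLp 2 (Fin.removeNth p x) with hf
  set g : EuclideanSpace ℝ (Fin d) → EuclideanSpace ℝ (Fin (d+1)) :=
    fun y => WithLp.toLp 2 (Fin.insertNth p (-s) y) with hgdef
  have hg : Isometry g := by
    refine Isometry.of_dist_eq fun y y' => ?_
    rw [EuclideanSpace.dist_eq, EuclideanSpace.dist_eq]
    congr 1
    rw [Fin.sum_univ_succAbove (fun j => dist (g y j) (g y' j) ^ 2) p]
    simp [hgdef]
  -- Step 1: `μH H ≤ μH (f '' H)`
  have step1 : μH[(d : ℝ) - 1] H ≤ μH[(d : ℝ) - 1] (f '' H) := by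
    have hsub : H ⊆ g '' (f '' H) := by
      intro x hx
      refine ⟨f x, Set.mem_image_of_mem _ hx, ?_⟩
      have hxp : x p = -s := hx.2
      show WithLp.toLp 2 (Fin.insertNth p (-s) (Fin.removeNth p x.ofLp)) = x
      rw [← hxp]
      exact congrArg (WithLp.toLp 2) (Fin.insertNth_self_removeNth p x.ofLp)
    calc μH[(d : ℝ) - 1] H ≤ μH[(d : ℝ) - 1] (g '' (f '' H)) := measure_mono hsub
      _ = μH[(d : ℝ) - 1] (f '' H) := hg.hausdorffMeasure_image (Or.inl hd1) _
  -- Step 2: `f '' H ⊆ c • V d k (a / c)`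
  have step2 : f '' H ⊆ c • V d k (a / c) := by
    rintro _ ⟨x, ⟨⟨hx1, hx2⟩, hxp⟩, rfl⟩
    have hxp : x p = -s := hxp
    rw [Set.mem_smul_set_iff_inv_smul_mem₀ (ne_of_gt hc0)]
    have hnorm : ∑ i : Fin d, (f x i) ^ 2 = 1 - s ^ 2 := by
      have h1 : ∑ j : Fin (d+1), (x j) ^ 2 = 1 := by
        have := mem_sphere_zero_iff_norm.mp hx1
        rw [EuclideanSpace.norm_eq] at this
        have hnn : (0:ℝ) ≤ ∑ j : Fin (d+1), ‖x j‖ ^ 2 :=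
          Finset.sum_nonneg fun j _ => sq_nonneg _
        have h2 : ∑ j : Fin (d+1), ‖x j‖ ^ 2 = 1 := by
          nlinarith [Real.sq_sqrt hnn]
        simpa [Real.norm_eq_abs, sq_abs] using h2
      rw [Fin.sum_univ_succAbove (fun j => (x j) ^ 2) p, hxp] at h1
      have : ∀ i : Fin d, f x i = x (p.succAbove i) := fun i => rfl
      simp only [this]
      nlinarith
    constructor
    · rw [mem_sphere_zero_iff_norm, norm_smul, EuclideanSpace.norm_eq]
      have : Real.sqrt (∑ i : Fin d, ‖f x i‖ ^ 2) = c := by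
        rw [hc]
        congr 1
        simpa [Real.norm_eq_abs, sq_abs] using hnorm
      rw [this, norm_inv, Real.norm_of_nonneg hc0.le]
      field_simp
    · intro i
      have hcoord : (c⁻¹ • f x) i = c⁻¹ * x (p.succAbove i) := rfl
      rcases lt_or_ge (i : ℕ) k with h | h
      · rw [if_pos h, hcoord]
        have hsa' : p.succAbove i = i.castSucc := by
          apply Fin.succAbove_of_castSucc_lt
          rw [Fin.lt_def]
          exact h
        have hv := hx2 (p.succAbove i)
        rw [hsa', if_pos (by simpa using Nat.lt_succ_of_lt h)] at hv
        rw [hsa']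
        have key := mul_le_mul_of_nonneg_left hv (inv_nonneg.mpr hc0.le)
        have heq : c⁻¹ * (-a) = -(a / c) := by rw [mul_neg, div_eq_inv_mul]
        linarith
      · rw [if_neg (not_lt.mpr h), hcoord]
        have hsa' : p.succAbove i = i.succ := by
          apply Fin.succAbove_of_le_castSucc
          rw [Fin.le_def]
          exact h
        have hv := hx2 (p.succAbove i)
        rw [hsa', if_neg (by simp [Nat.succ_le_succ h, not_lt.mpr])] at hv
        rw [hsa']
        exact mul_nonneg (inv_nonneg.mpr hc0.le) hv
  -- Step 3: scaling of Hausdorff measure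
  have step3 : μH[(d : ℝ) - 1] (c • V d k (a / c)) =
      ENNReal.ofReal ((1 - s ^ 2) ^ (((d : ℝ) - 1) / 2)) *
        μH[(d : ℝ) - 1] (V d k (a / c)) := by
    rw [Measure.hausdorffMeasure_smul₀ hd1 (ne_of_gt hc0), ENNReal.smul_def]
    congr 1
    rw [ENNReal.coe_rpow_of_nonneg _ hd1, ← enorm_eq_nnnorm, Real.enorm_eq_ofReal hc0.le,
      ENNReal.ofReal_rpow_of_pos hc0]
    congr 1
    rw [hc, Real.sqrt_eq_rpow, ← Real.rpow_mul h1s2.le]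
    ring_nf
  have main : μH[(d : ℝ) - 1] H ≤
      ENNReal.ofReal ((1 - s ^ 2) ^ (((d : ℝ) - 1) / 2)) *
        μH[(d : ℝ) - 1] (V d k (a / c)) := by
    calc μH[(d : ℝ) - 1] H ≤ μH[(d : ℝ) - 1] (f '' H) := step1
      _ ≤ μH[(d : ℝ) - 1] (c • V d k (a / c)) := measure_mono step2
      _ = _ := step3
  refine ⟨main, main.trans ?_⟩
  have h1 : ENNReal.ofReal ((1 - s ^ 2) ^ (((d : ℝ) - 1) / 2)) ≤ 1 := by
    rw [ENNReal.ofReal_le_one]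
    exact Real.rpow_le_one h1s2.le (by nlinarith) (by linarith)
  have h2 : μH[(d : ℝ) - 1] (V d k (a / c)) ≤
      μH[(d : ℝ) - 1] (V d k (a / Real.sqrt (1 - a ^ 2))) := by
    apply measure_mono
    apply V_mono
    apply div_le_div_of_nonneg_left ha0 (Real.sqrt_pos.mpr h1a2)
    exact Real.sqrt_le_sqrt (by nlinarith)
  calc ENNReal.ofReal ((1 - s ^ 2) ^ (((d : ℝ) - 1) / 2)) *
        μH[(d : ℝ) - 1] (V d k (a / c)) ≤ 1 * μH[(d : ℝ) - 1] (V d k (a / Real.sqrt (1 - a ^ 2))) :=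
        mul_le_mul' h1 h2
    _ = _ := one_mul _
end

section
/- Let ε ∈ (0,1) and let d ≥ 1 be an integer with d·ε² ≤ 1. Then for every real a with 0 ≤ a ≤ ε/√(d+1-d·ε²), one has a·ω_{d-1}/ω_d ≤ ε, where ω_{d-1} and ω_d are the (d-1)- and d-dimensional Hausdorff measures of the unit spheres S^{d-1} ⊆ ℝ^d and S^d ⊆ ℝ^{d+1} respectively. -/
/-!
At each height `t ∈ [-h, h]` the unit sphere `Sⁿ⁺¹` meets the horizontal hyperplane in a round
`n`-sphere of radius `√(1 - t²) ≥ ρ` (when `h² + ρ² ≤ 1`), which a radial contraction maps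
`1`-Lipschitz onto `ρ • Sⁿ`.
An Eilenberg-type slicing inequality (slice a cover of `Sⁿ⁺¹` at every height and integrate over
`t`) then gives `2 h ρⁿ ωₙ ≤ ωₙ₊₁`. For `d = n + 1`, `ρ² = d / (d + 1)` and `h = ρ / √d` the
coefficient is `2 ρᵈ / √d ≥ 1 / √d`, because `(1 + 1/d)ᵈ ≤ e < 4`, whereas the hypotheses give
`a ≤ ε / √d`.
-/

open MeasureTheory Measure Metric Set
open scoped ENNReal NNReal Pointwise

section Slicing

variable {X Y : Type*} [EMetricSpace X] [EMetricSpace Y]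

noncomputable def approxHausdorffMeasure (s : ℝ) (r : ℝ≥0∞) (B : Set X) : ℝ≥0∞ :=
  ⨅ (U : ℕ → Set X) (_ : B ⊆ ⋃ n, U n) (_ : ∀ n, ediam (U n) ≤ r),
    ∑' n, ⨆ _ : (U n).Nonempty, ediam (U n) ^ s

theorem hausdorffMeasure_eq_iSup_approxHausdorffMeasure [MeasurableSpace X] [BorelSpace X]
    (s : ℝ) (B : Set X) : μH[s] B = ⨆ (r : ℝ≥0∞) (_ : 0 < r), approxHausdorffMeasure s r B :=
  hausdorffMeasure_apply s B

theorem volume_closure_image_le_ediam {f : X → ℝ} (hf : LipschitzWith 1 f) (S : Set X) :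
    volume (closure (f '' S)) ≤ ediam S :=
  calc volume (closure (f '' S)) ≤ ediam (closure (f '' S)) := Real.volume_le_diam _
    _ = ediam (f '' S) := ediam_closure _
    _ ≤ ediam S := by simpa using hf.ediam_image_le S

theorem approxHausdorffMeasure_le_tsum_indicator {f : X → ℝ} {g : X → Y} (hg : LipschitzWith 1 g)
    {A : Set X} {B : Set Y} {s : ℝ} (hs : 0 ≤ s) {r : ℝ≥0∞} {U : ℕ → Set X}
    (hAU : A ⊆ ⋃ n, U n) (hUr : ∀ n, ediam (U n) ≤ r) {t : ℝ}
    (hBg : B ⊆ g '' (A ∩ f ⁻¹' {t})) :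
    approxHausdorffMeasure s r B ≤
      ∑' n, (closure (f '' (U n ∩ A))).indicator (fun _ => ediam (U n) ^ s) t := by
  set W : ℕ → Set Y := fun n => g '' (U n ∩ (A ∩ f ⁻¹' {t}))
  have hWU : ∀ n, ediam (W n) ≤ ediam (U n) := fun n =>
    (by simpa using hg.ediam_image_le _ : ediam (W n) ≤ _).trans (ediam_mono inter_subset_left)
  have hBW : B ⊆ ⋃ n, W n := by
    refine hBg.trans ?_
    rw [← image_iUnion, ← iUnion_inter]
    exact image_mono (subset_inter (inter_subset_left.trans hAU) subset_rfl)
  refine (iInf₂_le W hBW).trans ((iInf_le _ fun n => (hWU n).trans (hUr n)).trans ?_)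
  refine ENNReal.tsum_le_tsum fun n => iSup_le fun ⟨_, ⟨x, ⟨hxU, hxA, hxt⟩, _⟩⟩ => ?_
  have ht : t ∈ closure (f '' (U n ∩ A)) := subset_closure ⟨x, ⟨hxU, hxA⟩, hxt⟩
  rw [indicator_of_mem ht]
  exact ENNReal.rpow_le_rpow (hWU n) hs

theorem rpow_mul_volume_closure_image_le {f : X → ℝ} (hf : LipschitzWith 1 f) {s : ℝ}
    (hs : 0 ≤ s) (U A : Set X) :
    ediam U ^ s * volume (closure (f '' (U ∩ A))) ≤ ⨆ _ : U.Nonempty, ediam U ^ (s + 1) := by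
  rcases U.eq_empty_or_nonempty with rfl | hU
  · simp
  rw [iSup_pos hU, ENNReal.rpow_add_of_nonneg s 1 hs zero_le_one, ENNReal.rpow_one]
  gcongr
  exact (volume_closure_image_le_ediam hf _).trans (ediam_mono inter_subset_left)

theorem volume_mul_approxHausdorffMeasure_le {f : X → ℝ} (hf : LipschitzWith 1 f)
    {A : Set X} {B : Set Y} {I : Set ℝ} {s : ℝ} (hs : 0 ≤ s) (r : ℝ≥0∞)
    (hB : ∀ t ∈ I, ∃ g : X → Y, LipschitzWith 1 g ∧ B ⊆ g '' (A ∩ f ⁻¹' {t})) :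
    volume I * approxHausdorffMeasure s r B ≤ approxHausdorffMeasure (s + 1) r A := by
  refine le_iInf fun U => le_iInf fun hAU => le_iInf fun hUr => ?_
  -- `U n` meets the slice at height `t` only if `t ∈ closure (f '' (U n ∩ A))`, a set of
  -- length at most `ediam (U n)`.
  set φ : ℕ → ℝ → ℝ≥0∞ := fun n =>
    (closure (f '' (U n ∩ A))).indicator fun _ => ediam (U n) ^ s
  have hφ : ∀ n, Measurable (φ n) := fun n =>
    measurable_const.indicator isClosed_closure.measurableSet
  have hslice : ∀ t ∈ I, approxHausdorffMeasure s r B ≤ ∑' n, φ n t := fun t ht => by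
    obtain ⟨g, hg, hBg⟩ := hB t ht
    exact approxHausdorffMeasure_le_tsum_indicator hg hs hAU hUr hBg
  calc volume I * approxHausdorffMeasure s r B
      = ∫⁻ _ in I, approxHausdorffMeasure s r B := by rw [setLIntegral_const, mul_comm]
    _ ≤ ∫⁻ t in I, ∑' n, φ n t := setLIntegral_mono (.tsum hφ) hslice
    _ ≤ ∫⁻ t, ∑' n, φ n t := setLIntegral_le_lintegral _ _
    _ = ∑' n, ediam (U n) ^ s * volume (closure (f '' (U n ∩ A))) := by
      rw [lintegral_tsum fun n => (hφ n).aemeasurable]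
      simp only [φ, lintegral_indicator isClosed_closure.measurableSet, setLIntegral_const]
    _ ≤ ∑' n, ⨆ _ : (U n).Nonempty, ediam (U n) ^ (s + 1) :=
      ENNReal.tsum_le_tsum fun n => rpow_mul_volume_closure_image_le hf hs _ _

theorem volume_mul_hausdorffMeasure_le [MeasurableSpace X] [BorelSpace X]
    [MeasurableSpace Y] [BorelSpace Y] {f : X → ℝ} (hf : LipschitzWith 1 f)
    {A : Set X} {B : Set Y} {I : Set ℝ} {s : ℝ} (hs : 0 ≤ s)
    (hB : ∀ t ∈ I, ∃ g : X → Y, LipschitzWith 1 g ∧ B ⊆ g '' (A ∩ f ⁻¹' {t})) :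
    volume I * μH[s] B ≤ μH[s + 1] A := by
  simp only [hausdorffMeasure_eq_iSup_approxHausdorffMeasure, ENNReal.mul_iSup]
  exact iSup₂_mono fun r _ => volume_mul_approxHausdorffMeasure_le hf hs r hB

end Slicing

namespace EuclideanSpace

variable {n : ℕ}

def init (x : EuclideanSpace ℝ (Fin (n + 1))) : EuclideanSpace ℝ (Fin n) :=
  WithLp.toLp 2 (Fin.init x.ofLp)

def snoc (y : EuclideanSpace ℝ (Fin n)) (t : ℝ) : EuclideanSpace ℝ (Fin (n + 1)) :=
  WithLp.toLp 2 (Fin.snoc y.ofLp t)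

@[simp] theorem init_snoc (y : EuclideanSpace ℝ (Fin n)) (t : ℝ) : init (snoc y t) = y := by
  simp [init, snoc]

@[simp] theorem snoc_last (y : EuclideanSpace ℝ (Fin n)) (t : ℝ) : snoc y t (Fin.last n) = t := by
  simp [snoc]

theorem norm_snoc_sq (y : EuclideanSpace ℝ (Fin n)) (t : ℝ) : ‖snoc y t‖ ^ 2 = ‖y‖ ^ 2 + t ^ 2 := by
  simp [real_norm_sq_eq, Fin.sum_univ_castSucc, snoc]

theorem lipschitzWith_one_init : LipschitzWith 1 (init (n := n)) := by
  refine LipschitzWith.of_dist_le_mul fun x y => ?_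
  rw [NNReal.coe_one, one_mul, dist_eq, dist_eq, Fin.sum_univ_castSucc]
  exact Real.sqrt_le_sqrt (le_add_of_nonneg_right (sq_nonneg _))

theorem lipschitzWith_one_apply {ι : Type*} [Fintype ι] (i : ι) :
    LipschitzWith 1 fun x : EuclideanSpace ℝ ι => x i :=
  .of_edist_le fun x y => PiLp.edist_apply_le x y i

end EuclideanSpace

open EuclideanSpace

theorem exists_lipschitzWith_smul_sphere_subset_image_slice {n : ℕ} {ρ t : ℝ} (hρ : 0 < ρ)
    (ht : t ^ 2 + ρ ^ 2 ≤ 1) :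
    ∃ g : EuclideanSpace ℝ (Fin (n + 1)) → EuclideanSpace ℝ (Fin n), LipschitzWith 1 g ∧
      ρ • sphere (0 : EuclideanSpace ℝ (Fin n)) 1 ⊆
        g '' (sphere 0 1 ∩ (fun x => x (Fin.last n)) ⁻¹' {t}) := by
  set r := √(1 - t ^ 2)
  have hρr : ρ ≤ r := (Real.le_sqrt' hρ).2 (by linarith)
  have hr : 0 < r := hρ.trans_le hρr
  have hr_sq : r ^ 2 = 1 - t ^ 2 := Real.sq_sqrt (by linarith [sq_nonneg ρ])
  refine ⟨fun x => (ρ / r) • init x, ?_, ?_⟩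
  · refine ((lipschitzWith_smul (ρ / r)).comp lipschitzWith_one_init).weaken ?_
    rw [mul_one, ← NNReal.coe_le_coe, coe_nnnorm, Real.norm_of_nonneg (by positivity)]
    exact div_le_one_of_le₀ hρr hr.le
  · rintro _ ⟨y, hy, rfl⟩
    rw [mem_sphere_zero_iff_norm] at hy
    refine ⟨snoc (r • y) t, ⟨?_, snoc_last _ _⟩, ?_⟩
    · rw [mem_sphere_zero_iff_norm, ← pow_eq_one_iff_of_nonneg (norm_nonneg _) two_ne_zero,
        norm_snoc_sq, norm_smul, hy, mul_one, Real.norm_of_nonneg hr.le, hr_sq]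
      ring
    · simp [smul_smul, div_mul_cancel₀ ρ hr.ne']

theorem ofReal_mul_hausdorffMeasure_sphere_le {n : ℕ} {h ρ : ℝ} (hρ : 0 < ρ)
    (hhρ : h ^ 2 + ρ ^ 2 ≤ 1) :
    ENNReal.ofReal (2 * h * ρ ^ n) * μH[n] (sphere (0 : EuclideanSpace ℝ (Fin (n + 1))) 1) ≤
      μH[n + 1] (sphere (0 : EuclideanSpace ℝ (Fin (n + 2))) 1) := by
  have hslice := volume_mul_hausdorffMeasure_le (lipschitzWith_one_apply (Fin.last (n + 1)))
    (A := sphere 0 1) (B := ρ • sphere 0 1) (I := Icc (-h) h) (Nat.cast_nonneg n)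
    fun t ⟨hht, hth⟩ => exists_lipschitzWith_smul_sphere_subset_image_slice hρ
      (by nlinarith [sq_le_sq' hht hth])
  rw [Real.volume_Icc, hausdorffMeasure_smul₀ (Nat.cast_nonneg n) hρ.ne', ENNReal.smul_def,
    smul_eq_mul, ← mul_assoc] at hslice
  convert hslice using 2
  rw [ENNReal.ofReal_mul' (by positivity), ENNReal.ofReal_pow hρ.le, NNReal.rpow_natCast,
    ENNReal.coe_pow, ← Real.enorm_eq_ofReal hρ.le, enorm_eq_nnnorm, two_mul, sub_neg_eq_add]

theorem inv_four_le_div_add_one_pow (m : ℕ) : (1 / 4 : ℝ) ≤ (m / (m + 1)) ^ m := by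
  rcases Nat.eq_zero_or_pos m with rfl | hm
  · norm_num
  have hm' : (0 : ℝ) < m := Nat.cast_pos.2 hm
  have hinv : (m / (m + 1) : ℝ) = (1 + (m : ℝ)⁻¹)⁻¹ := by field_simp
  have he : (1 + (m : ℝ)⁻¹) ^ m ≤ 4 :=
    Real.one_add_inv_pow_le_exp.trans (Real.exp_one_lt_d9.le.trans (by norm_num))
  rw [hinv, inv_pow, one_div]
  exact inv_anti₀ (by positivity) he

theorem one_le_two_mul_sqrt_div_add_one_pow (m : ℕ) : 1 ≤ 2 * √(m / (m + 1)) ^ m := by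
  rw [← one_le_sq_iff₀ (by positivity), mul_pow, ← pow_mul, mul_comm m, pow_mul,
    Real.sq_sqrt (by positivity)]
  linarith [inv_four_le_div_add_one_pow m]

theorem exists_sq_add_sq_le_one_inv_sqrt_le_two_mul_mul_pow (n : ℕ) :
    ∃ h ρ : ℝ, 0 < ρ ∧ h ^ 2 + ρ ^ 2 ≤ 1 ∧ (√(n + 1))⁻¹ ≤ 2 * h * ρ ^ n := by
  set ρ := √((n + 1) / (n + 1 + 1))
  have hn : (0 : ℝ) < n + 1 := by positivity
  have hρ : 0 < ρ := Real.sqrt_pos.2 (by positivity)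
  have hρ_pow : 1 ≤ 2 * ρ ^ (n + 1) := by
    simpa using one_le_two_mul_sqrt_div_add_one_pow (n + 1)
  refine ⟨ρ / √(n + 1), ρ, hρ, ?_, ?_⟩
  · rw [div_pow, Real.sq_sqrt hn.le, Real.sq_sqrt (by positivity)]
    field_simp
    linarith
  · calc (√(n + 1))⁻¹ = 1 / √(n + 1) := inv_eq_one_div _
      _ ≤ 2 * ρ ^ (n + 1) / √(n + 1) := by gcongr
      _ = 2 * (ρ / √(n + 1)) * ρ ^ n := by ring

theorem a_times_sphere_ratio_le_general (ε : ℝ) (hε0 : 0 < ε)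
    (d : ℕ) (hd : 1 ≤ d) (hdε : (d : ℝ) * ε ^ 2 ≤ 1)
    (a : ℝ)
    (ha : a ≤ ε / Real.sqrt ((d : ℝ) + 1 - (d : ℝ) * ε ^ 2)) :
    ENNReal.ofReal a *
        μH[(d : ℝ) - 1] (Metric.sphere (0 : EuclideanSpace ℝ (Fin d)) 1) /
        μH[(d : ℝ)] (Metric.sphere (0 : EuclideanSpace ℝ (Fin (d + 1))) 1) ≤
      ENNReal.ofReal ε := by
  obtain ⟨n, rfl⟩ := Nat.exists_eq_add_of_le' hd
  rw [Nat.cast_succ] at hdε ha ⊢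
  obtain ⟨h, ρ, hρ, hhρ, hcoef⟩ := exists_sq_add_sq_le_one_inv_sqrt_le_two_mul_mul_pow n
  have ha' : a ≤ ε * (2 * h * ρ ^ n) := calc
    a ≤ ε / √(n + 1) :=
      ha.trans (div_le_div_of_nonneg_left hε0.le (by positivity) (Real.sqrt_le_sqrt (by linarith)))
    _ = ε * (√(n + 1))⁻¹ := div_eq_mul_inv _ _
    _ ≤ ε * (2 * h * ρ ^ n) := by gcongr
  refine ENNReal.div_le_of_le_mul ?_
  rw [add_sub_cancel_right]
  calc ENNReal.ofReal a * μH[n] (sphere (0 : EuclideanSpace ℝ (Fin (n + 1))) 1)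
      ≤ ENNReal.ofReal ε * (ENNReal.ofReal (2 * h * ρ ^ n) *
          μH[n] (sphere (0 : EuclideanSpace ℝ (Fin (n + 1))) 1)) := by
        rw [← mul_assoc, ← ENNReal.ofReal_mul hε0.le]
        gcongr
    _ ≤ _ := by
        gcongr
        exact ofReal_mul_hausdorffMeasure_sphere_le hρ hhρ

/-- for `ε ∈ (0,1)`, `d ≥ 1` with `d·ε² ≤ 1`, and
`0 ≤ a ≤ ε/√(d+1-d·ε²)`, one has `a·ω_{d-1}/ω_d ≤ ε`. -/
theorem a_times_sphere_ratio_le (ε : ℝ) (hε0 : 0 < ε) (hε1 : ε < 1)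
    (d : ℕ) (hd : 1 ≤ d) (hdε : (d : ℝ) * ε ^ 2 ≤ 1)
    (a : ℝ) (ha0 : 0 ≤ a)
    (ha : a ≤ ε / Real.sqrt ((d : ℝ) + 1 - (d : ℝ) * ε ^ 2)) :
    ENNReal.ofReal a *
        μH[(d : ℝ) - 1] (Metric.sphere (0 : EuclideanSpace ℝ (Fin d)) 1) /
        μH[(d : ℝ)] (Metric.sphere (0 : EuclideanSpace ℝ (Fin (d + 1))) 1) ≤
      ENNReal.ofReal ε :=
  a_times_sphere_ratio_le_general ε hε0 d hd hdε a ha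
end
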